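/- arXiv:1112.5717 — 5 statements merged into one kernel-verified Lean document; each statement's English description precedes it below -/
import Mathlib

section
/- Suppose A·Pᵀ·Y = C where C is in column echelon form of rank r with pivot rows i_0<...<i_{r-1}, Y is unit upper triangular, P a permutation matrix, and L1 is the invertible lower triangular matrix of pivot rows of C. Then A·Pᵀ·(Y·diag(L1⁻¹, I)) = C·diag(L1⁻¹, I) is a transformation of A to reduced column echelon form. -/
open Matrix Finset

lemma sum_fin_castLE_aux {M : Type*} [AddCommMonoid M] {n r : ℕ} (hr : r ≤ n)
    (f : Fin n → M) (hf : ∀ k : Fin n, r ≤ (k : ℕ) → f k = 0) :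
    ∑ k : Fin n, f k = ∑ t : Fin r, f (Fin.castLE hr t) := by
  have := (Finset.sum_map Finset.univ (Fin.castLEEmb hr) f).symm
  simp only [Fin.castLEEmb_apply] at this
  rw [this]
  symm
  apply Finset.sum_subset (Finset.subset_univ _)
  intro k _ hk
  apply hf
  by_contra h
  push_neg at h
  exact hk (by simp [Fin.castLEEmb]; exact ⟨⟨k, h⟩, rfl⟩)

/-- If `A·Pᵀ·Y = C` is a transformation of `A` to column echelon form (of rank
`r`, pivot rows `piv`, `Y` unit upper triangular, `P` a permutation matrix) and
`L1` is the lower triangular matrix of pivot rows of `C`, then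
`A·Pᵀ·(Y·diag(L1⁻¹, I)) = C·diag(L1⁻¹, I)` is a transformation of `A` to
reduced column echelon form. -/
theorem cup_stmt10 {K : Type*} [Field K] {m n r : ℕ} (hr : r ≤ n)
    (A C : Matrix (Fin m) (Fin n) K) (Y P : Matrix (Fin n) (Fin n) K)
    (σ : Equiv.Perm (Fin n)) (hP : P = σ.permMatrix K)
    (hYdiag : ∀ i : Fin n, Y i i = 1)
    (hYtri : ∀ i j : Fin n, (j : ℕ) < (i : ℕ) → Y i j = 0)
    (piv : Fin r → Fin m) (hpiv : StrictMono piv)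
    (hCpiv : ∀ j : Fin r, C (piv j) (Fin.castLE hr j) ≠ 0)
    (hCabove : ∀ j : Fin r, ∀ i : Fin m,
        (i : ℕ) < (piv j : ℕ) → C i (Fin.castLE hr j) = 0)
    (hCzero : ∀ c : Fin n, r ≤ (c : ℕ) → ∀ i : Fin m, C i c = 0)
    (hACE : A * Pᵀ * Y = C)
    (L1 : Matrix (Fin r) (Fin r) K)
    (hL1 : ∀ j t : Fin r, L1 j t = C (piv j) (Fin.castLE hr t))
    (D : Matrix (Fin n) (Fin n) K)
    (hD : ∀ i j : Fin n, D i j =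
        if hi : (i : ℕ) < r then
          (if hj : (j : ℕ) < r then L1⁻¹ ⟨(i : ℕ), hi⟩ ⟨(j : ℕ), hj⟩ else 0)
        else (if i = j then 1 else 0)) :
    A * Pᵀ * (Y * D) = C * D ∧
    (∀ j : Fin r, ∀ c : Fin n,
        (C * D) (piv j) c = if (c : ℕ) = (j : ℕ) then 1 else 0) ∧
    (∀ j : Fin r, ∀ i : Fin m,
        (i : ℕ) < (piv j : ℕ) → (C * D) i (Fin.castLE hr j) = 0) ∧
    (∀ c : Fin n, r ≤ (c : ℕ) → ∀ i : Fin m, (C * D) i c = 0) := by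
  -- L1 is lower triangular
  have hL1tri : L1.BlockTriangular OrderDual.toDual := by
    intro j t h
    simp only [OrderDual.toDual_lt_toDual] at h
    rw [hL1]
    exact hCabove t (piv j) (hpiv h)
  -- determinant nonzero
  have hdet : IsUnit L1.det := by
    rw [Matrix.det_of_lowerTriangular L1 hL1tri]
    rw [isUnit_iff_ne_zero, Finset.prod_ne_zero_iff]
    intro i _
    simpa [hL1] using hCpiv i
  have : Invertible L1 := L1.invertibleOfIsUnitDet hdet
  have hL1invtri : L1⁻¹.BlockTriangular OrderDual.toDual :=
    Matrix.blockTriangular_inv_of_blockTriangular hL1tri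
  have hmul : L1 * L1⁻¹ = 1 := Matrix.mul_nonsing_inv L1 hdet
  -- key: entries of C * D for c < r
  have key : ∀ (i : Fin m) (c : Fin n) (hc : (c : ℕ) < r),
      (C * D) i c = ∑ t : Fin r, C i (Fin.castLE hr t) * L1⁻¹ t ⟨(c : ℕ), hc⟩ := by
    intro i c hc
    rw [Matrix.mul_apply]
    rw [sum_fin_castLE_aux hr (fun k => C i k * D k c)]
    · apply Finset.sum_congr rfl
      intro t _
      congr 1
      rw [hD]
      have ht : ((Fin.castLE hr t : Fin n) : ℕ) < r := t.isLt
      rw [dif_pos ht, dif_pos hc]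
      rfl
    · intro k hk
      rw [hD, dif_neg (by omega)]
      have : k ≠ c := fun h => by omega
      rw [if_neg this, mul_zero]
  -- fourth property
  have h4 : ∀ c : Fin n, r ≤ (c : ℕ) → ∀ i : Fin m, (C * D) i c = 0 := by
    intro c hc i
    rw [Matrix.mul_apply]
    apply Finset.sum_eq_zero
    intro k _
    by_cases hk : (k : ℕ) < r
    · rw [hD, dif_pos hk, dif_neg (by omega), mul_zero]
    · rw [hCzero k (by omega) i, zero_mul]
  refine ⟨?_, ?_, ?_, h4⟩
  · rw [← Matrix.mul_assoc, hACE]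
  · intro j c
    by_cases hc : (c : ℕ) < r
    · rw [key (piv j) c hc]
      have : ∀ t : Fin r, C (piv j) (Fin.castLE hr t) * L1⁻¹ t ⟨(c : ℕ), hc⟩
          = L1 j t * L1⁻¹ t ⟨(c : ℕ), hc⟩ := fun t => by rw [hL1]
      rw [Finset.sum_congr rfl (fun t _ => this t), ← Matrix.mul_apply, hmul,
        Matrix.one_apply]
      by_cases h : (c : ℕ) = (j : ℕ)
      · rw [if_pos h, if_pos (show j = ⟨(c : ℕ), hc⟩ from Fin.ext h.symm)]
      · rw [if_neg h, if_neg (fun he : j = ⟨(c : ℕ), hc⟩ => h (congrArg Fin.val he).symm)]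
    · rw [h4 c (by omega) (piv j), if_neg (by omega)]
  · intro j i hi
    have hc : ((Fin.castLE hr j : Fin n) : ℕ) < r := j.isLt
    rw [key i _ hc]
    apply Finset.sum_eq_zero
    intro t _
    by_cases ht : (j : ℕ) ≤ (t : ℕ)
    · have : (i : ℕ) < (piv t : ℕ) := lt_of_lt_of_le hi (by
        rcases eq_or_lt_of_le ht with h | h
        · exact le_of_eq (congrArg (fun x => ((piv x : Fin m) : ℕ)) (Fin.ext h))
        · exact le_of_lt (hpiv h))
      rw [hCabove t i this, zero_mul]
    · have : L1⁻¹ t ⟨((Fin.castLE hr j : Fin n) : ℕ), hc⟩ = 0 := by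
        apply hL1invtri
        simp only [OrderDual.toDual_lt_toDual, Fin.lt_def]
        simp only [Fin.coe_castLE]
        omega
      rw [this, mul_zero]
end

section
/- If A = C·U·P with C in column echelon form having exactly r nonzero columns, U unit upper triangular, P a permutation matrix, then rank(A) = r. -/
/-!
Right multiplication by the invertible matrices `U` (determinant `1`) and `P` (determinant `±1`)
preserves rank, and the transpose of a column echelon matrix is in row echelon form, whose rank is
its number of pivots.
-/

open Matrix

namespace Matrix

variable {m n K : Type*}

theorem rank_mul_permMatrix [Fintype n] [DecidableEq n] [CommRing K] (B : Matrix m n K)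
    (σ : Equiv.Perm n) : (B * σ.permMatrix K).rank = B.rank :=
  rank_mul_eq_left_of_isUnit_det _ B <| by
    rw [det_permutation]
    exact σ.sign.isUnit.map (Int.castRingHom K)

theorem rank_mul_eq_left_of_isUpperTriangular [Fintype n] [LinearOrder n] [CommRing K]
    [IsDomain K] (A : Matrix n n K) (B : Matrix m n K) (hA : A.IsUpperTriangular)
    (hd : ∀ i, A.diag i ≠ 0) : (B * A).rank = B.rank :=
  rank_mul_eq_left_of_det_ne_zero A B <| by
    simpa [det_of_isUpperTriangular hA, Finset.prod_ne_zero_iff]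

end Matrix

/-- The pivot map of `Cᵀ` in the sense of `Matrix.IsPivotedBy`, for a column echelon matrix `C`
with pivot rows `piv` in its first `r` columns; `⊤` marks a zero column. -/
def extendPivots {m n r : ℕ} (piv : Fin r → Fin m) (c : Fin n) : WithTop (Fin m) :=
  if h : (c : ℕ) < r then piv ⟨c, h⟩ else ⊤

theorem card_extendPivots_ne_top {m n r : ℕ} (hr : r ≤ n) (piv : Fin r → Fin m) :
    (Finset.univ.filter fun c : Fin n => extendPivots piv c ≠ ⊤).card = r := by
  have : (Finset.univ.filter fun c : Fin n => extendPivots piv c ≠ ⊤) =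
      Finset.univ.filter fun c : Fin n => (c : ℕ) < r := by
    ext c; simp [extendPivots]
  rw [this, Fin.card_filter_val_lt, min_eq_right hr]

theorem extendPivots_castLE {m n r : ℕ} (hr : r ≤ n) (piv : Fin r → Fin m) (j : Fin r) :
    extendPivots piv (Fin.castLE hr j) = piv j := by
  simp [extendPivots]

theorem extendPivots_eq_top {m n r : ℕ} (piv : Fin r → Fin m) {c : Fin n} (hc : r ≤ c) :
    extendPivots piv c = ⊤ := by
  simp [extendPivots, hc]

theorem isPivotedBy_transpose_extendPivots {R : Type*} [Zero R] {m n r : ℕ} (hr : r ≤ n)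
    (C : Matrix (Fin m) (Fin n) R) (piv : Fin r → Fin m) (hpiv : StrictMono piv)
    (hCpiv : ∀ j : Fin r, C (piv j) (Fin.castLE hr j) ≠ 0)
    (hCabove : ∀ j : Fin r, ∀ i : Fin m,
        (i : ℕ) < (piv j : ℕ) → C i (Fin.castLE hr j) = 0)
    (hCzero : ∀ c : Fin n, r ≤ (c : ℕ) → ∀ i : Fin m, C i c = 0) :
    Cᵀ.IsPivotedBy (extendPivots piv) := by
  have castLE_or_ge (c : Fin n) : (∃ j : Fin r, c = Fin.castLE hr j) ∨ r ≤ c := by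
    by_cases h : (c : ℕ) < r
    · exact .inl ⟨⟨c, h⟩, rfl⟩
    · exact .inr (not_lt.mp h)
  rw [isPivotedBy_iff]
  refine ⟨?_, ?_, fun c => ?_⟩
  · intro c₁ c₂ hle
    obtain ⟨j₂, rfl⟩ | h₂ := castLE_or_ge c₂
    · obtain ⟨j₁, rfl⟩ | h₁ := castLE_or_ge c₁
      · simpa [extendPivots_castLE] using hpiv.monotone hle
      · have : (c₁ : ℕ) ≤ j₂ := hle
        omega
    · simp [extendPivots_eq_top piv h₂]
  · intro c₁ hc₁ c₂ hc₂ hlt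
    obtain ⟨j₁, rfl⟩ | h₁ := castLE_or_ge c₁
    · obtain ⟨j₂, rfl⟩ | h₂ := castLE_or_ge c₂
      · simpa [extendPivots_castLE] using hpiv hlt
      · exact absurd (extendPivots_eq_top piv h₂) hc₂
    · exact absurd (extendPivots_eq_top piv h₁) hc₁
  · obtain ⟨j, rfl⟩ | hc := castLE_or_ge c
    · simp only [extendPivots_castLE, WithTop.coe_lt_coe, WithTop.coe_eq_coe, transpose_apply]
      exact ⟨fun i hi => hCabove j i hi, fun i hi => hi ▸ hCpiv j⟩
    · simp [extendPivots_eq_top piv hc, hCzero c hc]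

theorem rank_eq_of_isColumnEchelon {K : Type*} [Field K] {m n r : ℕ} (hr : r ≤ n)
    (C : Matrix (Fin m) (Fin n) K) (piv : Fin r → Fin m) (hpiv : StrictMono piv)
    (hCpiv : ∀ j : Fin r, C (piv j) (Fin.castLE hr j) ≠ 0)
    (hCabove : ∀ j : Fin r, ∀ i : Fin m,
        (i : ℕ) < (piv j : ℕ) → C i (Fin.castLE hr j) = 0)
    (hCzero : ∀ c : Fin n, r ≤ (c : ℕ) → ∀ i : Fin m, C i c = 0) :
    C.rank = r := by
  rw [← rank_transpose,
    (isPivotedBy_transpose_extendPivots hr C piv hpiv hCpiv hCabove hCzero).rank_eq,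
    card_extendPivots_ne_top hr]

/-- If `A = C·U·P` with `C` in column echelon form having exactly `r` nonzero
columns, `U` unit upper triangular and `P` a permutation matrix, then
`rank A = r`. -/
theorem cup_stmt11 {K : Type*} [Field K] {m n r : ℕ} (hr : r ≤ n)
    (A C : Matrix (Fin m) (Fin n) K) (U P : Matrix (Fin n) (Fin n) K)
    (piv : Fin r → Fin m) (hpiv : StrictMono piv)
    (hCpiv : ∀ j : Fin r, C (piv j) (Fin.castLE hr j) ≠ 0)
    (hCabove : ∀ j : Fin r, ∀ i : Fin m,
        (i : ℕ) < (piv j : ℕ) → C i (Fin.castLE hr j) = 0)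
    (hCzero : ∀ c : Fin n, r ≤ (c : ℕ) → ∀ i : Fin m, C i c = 0)
    (hUdiag : ∀ i : Fin n, U i i = 1)
    (hUtri : ∀ i j : Fin n, (j : ℕ) < (i : ℕ) → U i j = 0)
    (σ : Equiv.Perm (Fin n)) (hP : P = σ.permMatrix K)
    (hA : A = C * U * P) :
    A.rank = r := by
  have hU : U.IsUpperTriangular := fun i j h => hUtri i j h
  rw [hA, hP, rank_mul_permMatrix,
    rank_mul_eq_left_of_isUpperTriangular U C hU (by simp [hUdiag])]
  exact rank_eq_of_isColumnEchelon hr C piv hpiv hCpiv hCabove hCzero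
end

section
/- Every m×n matrix A over a field admits a decomposition A = C·U·P where C is in column echelon form, U is unit upper triangular, and P is a permutation matrix. -/
/-!
Gaussian elimination on the first row, by induction on the number of rows. If the first row
vanishes, factor the remaining rows and prepend a zero row to `C`. Otherwise a column swap
brings a nonzero entry `a` of the first row to the corner, writing the matrix as
`[[a, r], [c, M]]`; if the Schur complement `M - c a⁻¹ r` has columns, reordered by `σ`, equal
to `C' U'`, then, after reordering the last columns by `σ`, the matrix is
`[[a, 0], [c, C']] * [[1, a⁻¹ r], [0, U']]`.
-/

open Matrix

/-- `C` is in column echelon form: the nonzero columns precede the zero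
columns, and the row index of the first nonzero entry of each nonzero column
strictly increases with the column index. -/
def IsColEchelon {K : Type*} [Field K] {m n : ℕ}
    (C : Matrix (Fin m) (Fin n) K) : Prop :=
  ∃ (r : ℕ) (hr : r ≤ n) (piv : Fin r → Fin m), StrictMono piv ∧
    (∀ j : Fin n, r ≤ (j : ℕ) → ∀ i : Fin m, C i j = 0) ∧
    ∀ j : Fin r, C (piv j) (Fin.castLE hr j) ≠ 0 ∧
      ∀ i : Fin m, (i : ℕ) < (piv j : ℕ) → C i (Fin.castLE hr j) = 0

namespace Matrix

section Blocks

variable {α : Type*} {m n : ℕ}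

/-- The block matrix `[[a, r], [c, M]]`. -/
def consBlock (a : α) (r : Fin n → α) (c : Fin m → α) (M : Matrix (Fin m) (Fin n) α) :
    Matrix (Fin (m + 1)) (Fin (n + 1)) α :=
  of (vecCons (vecCons a r) fun i => vecCons (c i) (M i))

variable (a : α) (r : Fin n → α) (c : Fin m → α) (M : Matrix (Fin m) (Fin n) α)

@[simp] theorem consBlock_zero_zero : consBlock a r c M 0 0 = a := rfl
@[simp] theorem consBlock_zero_succ (j : Fin n) : consBlock a r c M 0 j.succ = r j := rfl
@[simp] theorem consBlock_succ_zero (i : Fin m) : consBlock a r c M i.succ 0 = c i := rfl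
@[simp] theorem consBlock_succ_succ (i : Fin m) (j : Fin n) :
    consBlock a r c M i.succ j.succ = M i j := rfl

theorem consBlock_eta (A : Matrix (Fin (m + 1)) (Fin (n + 1)) α) :
    consBlock (A 0 0) (fun j => A 0 j.succ) (fun i => A i.succ 0) (A.submatrix Fin.succ Fin.succ)
      = A := by
  ext i j
  refine Fin.cases ?_ (fun i => ?_) i <;> refine Fin.cases ?_ (fun j => ?_) j <;> rfl

theorem consBlock_mul_consBlock [CommSemiring α] {p : ℕ} (b : α) (s : Fin p → α) (d : Fin n → α)
    (N : Matrix (Fin n) (Fin p) α) :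
    consBlock a r c M * consBlock b s d N =
      consBlock (a * b + r ⬝ᵥ d) (a • s + r ᵥ* N) (b • c + M *ᵥ d) (vecMulVec c s + M * N) := by
  ext i j
  refine Fin.cases ?_ (fun i => ?_) i <;> refine Fin.cases ?_ (fun j => ?_) j <;>
    simp [mul_apply, Fin.sum_univ_succ, dotProduct, vecMul, mulVec, vecMulVec_apply, mul_comm]

theorem consBlock_submatrix_decomposeFin (σ : Equiv.Perm (Fin n)) :
    (consBlock a r c M).submatrix id (Equiv.Perm.decomposeFin.symm (0, σ)) =
      consBlock a (r ∘ σ) c (M.submatrix id σ) := by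
  ext i j
  refine Fin.cases ?_ (fun i => ?_) i <;> refine Fin.cases ?_ (fun j => ?_) j <;> simp

end Blocks

variable {K : Type*} [Field K] {m n : ℕ}

theorem isColEchelon_of_fin_zero (C : Matrix (Fin 0) (Fin n) K) : IsColEchelon C :=
  ⟨0, n.zero_le, Fin.elim0, fun a => a.elim0, fun _ _ i => i.elim0, fun j => j.elim0⟩

theorem IsColEchelon.cons_zero {C : Matrix (Fin m) (Fin n) K} (hC : IsColEchelon C) :
    IsColEchelon (of (vecCons 0 C)) := by
  obtain ⟨r, hr, piv, hmono, hzero, hpiv⟩ := hC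
  refine ⟨r, hr, Fin.succ ∘ piv, Fin.strictMono_succ.comp hmono, ?_, fun j => ⟨(hpiv j).1, ?_⟩⟩
  · intro j hj i
    exact Fin.cases rfl (fun i => hzero j hj i) i
  · intro i
    refine Fin.cases (fun _ => rfl) (fun i hi => (hpiv j).2 i ?_) i
    simpa using hi

theorem IsColEchelon.consBlock {a : K} (ha : a ≠ 0) (c : Fin m → K) {C : Matrix (Fin m) (Fin n) K}
    (hC : IsColEchelon C) : IsColEchelon (consBlock a 0 c C) := by
  obtain ⟨r, hr, piv, hmono, hzero, hpiv⟩ := hC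
  refine ⟨r + 1, Nat.succ_le_succ hr, Fin.cons 0 (Fin.succ ∘ piv), ?_, ?_, ?_⟩
  · exact Fin.strictMono_cons.2 ⟨fun j => Fin.succ_pos _, Fin.strictMono_succ.comp hmono⟩
  · intro j hj i
    cases j using Fin.cases with
    | zero => simp at hj
    | succ j => exact Fin.cases rfl (fun i => hzero j (by simpa using hj) i) i
  · intro j
    refine Fin.cases ⟨ha, fun i hi => absurd hi (by simp)⟩ (fun j => ?_) j
    simp only [Fin.castLE_succ, Fin.cons_succ, Function.comp_apply, consBlock_succ_succ]
    refine ⟨(hpiv j).1, fun i => Fin.cases (fun _ => rfl) (fun i hi => (hpiv j).2 i ?_) i⟩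
    simpa using hi

section UnitUpper

variable {α : Type*} [Zero α] [One α] {n : ℕ}

def IsUnitUpperTriangular (U : Matrix (Fin n) (Fin n) α) : Prop :=
  (∀ i, U i i = 1) ∧ ∀ i j : Fin n, j < i → U i j = 0

theorem isUnitUpperTriangular_one : IsUnitUpperTriangular (1 : Matrix (Fin n) (Fin n) α) :=
  ⟨one_apply_eq, fun _ _ h => one_apply_ne h.ne'⟩

theorem IsUnitUpperTriangular.consBlock {U : Matrix (Fin n) (Fin n) α}
    (hU : IsUnitUpperTriangular U) (r : Fin n → α) : IsUnitUpperTriangular (consBlock 1 r 0 U) := by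
  obtain ⟨hdiag, hlower⟩ := hU
  refine ⟨fun i => Fin.cases rfl hdiag i, fun i j hji => ?_⟩
  cases i using Fin.cases with
  | zero => exact absurd hji (Fin.not_lt_zero j)
  | succ i =>
    cases j using Fin.cases with
    | zero => rfl
    | succ j => exact hlower i j (Fin.succ_lt_succ_iff.mp hji)

end UnitUpper

-- `A.submatrix id σ = C * U` is `A = C * U * σ.permMatrix K`.
def HasCUPDecomposition (A : Matrix (Fin m) (Fin n) K) : Prop :=
  ∃ (σ : Equiv.Perm (Fin n)) (C : Matrix (Fin m) (Fin n) K) (U : Matrix (Fin n) (Fin n) K),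
    IsColEchelon C ∧ IsUnitUpperTriangular U ∧ A.submatrix id σ = C * U

theorem hasCUPDecomposition_of_fin_zero (A : Matrix (Fin 0) (Fin n) K) :
    HasCUPDecomposition A :=
  ⟨1, A, 1, isColEchelon_of_fin_zero A, isUnitUpperTriangular_one, by simp⟩

theorem HasCUPDecomposition.of_submatrix {A : Matrix (Fin m) (Fin n) K} (τ : Equiv.Perm (Fin n))
    (h : HasCUPDecomposition (A.submatrix id τ)) : HasCUPDecomposition A := by
  obtain ⟨σ, C, U, hC, hU, hA⟩ := h
  exact ⟨τ * σ, C, U, hC, hU, by rw [← hA, submatrix_submatrix]; rfl⟩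

theorem HasCUPDecomposition.cons_zero {A : Matrix (Fin m) (Fin n) K}
    (h : HasCUPDecomposition A) : HasCUPDecomposition (of (vecCons 0 A)) := by
  obtain ⟨σ, C, U, hC, hU, hA⟩ := h
  refine ⟨σ, of (vecCons 0 C), U, hC.cons_zero, hU, ?_⟩
  ext i j
  refine Fin.cases ?_ (fun i => congrFun (congrFun hA i) j) i
  exact (Finset.sum_eq_zero (s := Finset.univ) fun k _ => zero_mul (U k j)).symm

theorem HasCUPDecomposition.consBlock {a : K} (ha : a ≠ 0) (r : Fin n → K) (c : Fin m → K)
    (M : Matrix (Fin m) (Fin n) K) (h : HasCUPDecomposition (M - vecMulVec c (a⁻¹ • r))) :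
    HasCUPDecomposition (consBlock a r c M) := by
  obtain ⟨σ, C, U, hC, hU, hM⟩ := h
  refine ⟨Equiv.Perm.decomposeFin.symm (0, σ), Matrix.consBlock a 0 c C,
    Matrix.consBlock 1 (a⁻¹ • r ∘ σ) 0 U,
    hC.consBlock ha c, hU.consBlock _, ?_⟩
  rw [consBlock_submatrix_decomposeFin, consBlock_mul_consBlock, ← hM]
  congr 1
  · simp
  · ext j
    simp [ha]
  · simp
  · ext i j
    simp [vecMulVec_apply]

theorem hasCUPDecomposition (A : Matrix (Fin m) (Fin n) K) : HasCUPDecomposition A := by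
  induction m generalizing n with
  | zero => exact hasCUPDecomposition_of_fin_zero A
  | succ m ih =>
    by_cases hrow : A 0 = 0
    · have hA : A = of (vecCons 0 (A.submatrix Fin.succ id)) := by
        rw [← hrow]
        exact (Fin.cons_self_tail A).symm
      rw [hA]
      exact (ih _).cons_zero
    · obtain ⟨j, hj⟩ := Function.ne_iff.mp hrow
      cases n with
      | zero => exact j.elim0
      | succ n =>
        refine .of_submatrix (Equiv.swap 0 j) ?_
        rw [← consBlock_eta (A.submatrix id (Equiv.swap 0 j))]
        exact .consBlock (by simpa using hj) _ _ _ (ih _)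

end Matrix

/-- Every matrix over a field admits a CUP decomposition `A = C·U·P` with `C`
in column echelon form, `U` unit upper triangular and `P` a permutation
matrix. -/
theorem cup_stmt14 {K : Type*} [Field K] {m n : ℕ}
    (A : Matrix (Fin m) (Fin n) K) :
    ∃ (C : Matrix (Fin m) (Fin n) K) (U P : Matrix (Fin n) (Fin n) K)
      (σ : Equiv.Perm (Fin n)),
        IsColEchelon C ∧
        (∀ i : Fin n, U i i = 1) ∧
        (∀ i j : Fin n, (j : ℕ) < (i : ℕ) → U i j = 0) ∧
        P = σ.permMatrix K ∧
        A = C * U * P := by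
  obtain ⟨σ, C, U, hC, ⟨hdiag, hlower⟩, hA⟩ := hasCUPDecomposition A
  refine ⟨C, U, σ.permMatrix K, σ, hC, hdiag, hlower, rfl, ?_⟩
  rw [← hA, PEquiv.mul_toMatrix_toPEquiv, submatrix_submatrix]
  simp
end

section
/- Block step correctness of CUP: suppose A = [[A1],[A2]] with A1 = C1·[U1 V1]·P1 where C1 is k×r1 column echelon of full column rank, U1 r1×r1 unit upper triangular. Write A2·P1ᵀ = [A21 A22] with A21 of width r1, and set G = A21·U1⁻¹, H = A22 − G·V1. If H = C2·U2·P2 is a CUP decomposition of H, then A = C·U·P is a CUP decomposition of A where C = [[C1, 0],[G, C2]] (columns permuted into echelon form), U = [[U1, V1·P2ᵀ],[0, U2]] embedded as unit upper triangular, and P = diag(I_{r1}, P2)·P1. -/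
open Matrix

/-! Reading `A1 = C1·[U1 V1]·P1` and, from the definitions of `G` and `H`,
`A2 = [G·U1, G·V1 + C2·U2·P2]·P1`, the claim is a block multiplication in which the
factor `P2ᵀ` inserted next to `V1` is cancelled by the `P2` of `diag(I, P2)`. -/

lemma Matrix.transpose_permMatrix_mul_self {n R : Type*} [DecidableEq n] [Fintype n]
    [NonAssocSemiring R] (σ : Equiv.Perm n) : (σ.permMatrix R)ᵀ * σ.permMatrix R = 1 := by
  rw [transpose_permMatrix, ← permMatrix_mul, mul_inv_cancel, permMatrix_one]

lemma Matrix.BlockTriangular.nonsing_inv_mul_of_diag_eq_one {ι R : Type*} [Fintype ι]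
    [DecidableEq ι] [LinearOrder ι] [CommRing R] {U : Matrix ι ι R}
    (hU : U.BlockTriangular id) (hdiag : ∀ i, U i i = 1) : U⁻¹ * U = 1 :=
  nonsing_inv_mul U <| by simp [det_of_isUpperTriangular hU, hdiag]

lemma Matrix.fromBlocks_mul_fromBlocks_mul_fromBlocks_one {l m n p q R : Type*}
    [Fintype l] [Fintype m] [Fintype n] [DecidableEq l] [DecidableEq n] [Ring R]
    (C₁ : Matrix p l R) (G : Matrix q l R) (C₂ : Matrix q m R) (U₁ : Matrix l l R)
    (V₁ : Matrix l n R) (U₂ : Matrix m m R) {Q : Matrix m n R} {Q' : Matrix n m R}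
    (hQ : Q' * Q = 1) :
    fromBlocks C₁ 0 G C₂ * fromBlocks U₁ (V₁ * Q') 0 U₂ * fromBlocks (1 : Matrix l l R) 0 0 Q =
      fromRows (C₁ * fromCols U₁ V₁) (fromCols (G * U₁) (G * V₁ + C₂ * U₂ * Q)) := by
  simp only [fromBlocks_multiply, Matrix.mul_zero, Matrix.zero_mul, add_zero, zero_add,
    Matrix.mul_one, Matrix.add_mul, Matrix.mul_assoc, hQ, mul_fromCols,
    fromRows_fromCols_eq_fromBlocks]

theorem cup_stmt16_general {K : Type*} [Field K] {k m2 r1 n2 : ℕ}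
    (A1 : Matrix (Fin k) (Fin r1 ⊕ Fin n2) K)
    (A2 : Matrix (Fin m2) (Fin r1 ⊕ Fin n2) K)
    (C1 : Matrix (Fin k) (Fin r1) K)
    (U1 : Matrix (Fin r1) (Fin r1) K)
    (V1 : Matrix (Fin r1) (Fin n2) K)
    (P1 : Matrix (Fin r1 ⊕ Fin n2) (Fin r1 ⊕ Fin n2) K)
    (σ1 : Equiv.Perm (Fin r1 ⊕ Fin n2)) (hP1 : P1 = σ1.permMatrix K)
    (hU1diag : ∀ i : Fin r1, U1 i i = 1)
    (hU1tri : ∀ i j : Fin r1, (j : ℕ) < (i : ℕ) → U1 i j = 0)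
    (hA1 : A1 = C1 * fromCols U1 V1 * P1)
    (G : Matrix (Fin m2) (Fin r1) K)
    (hG : G = (A2 * P1ᵀ).toCols₁ * U1⁻¹)
    (H : Matrix (Fin m2) (Fin n2) K)
    (hH : H = (A2 * P1ᵀ).toCols₂ - G * V1)
    (C2 : Matrix (Fin m2) (Fin n2) K)
    (U2 : Matrix (Fin n2) (Fin n2) K)
    (P2 : Matrix (Fin n2) (Fin n2) K)
    (σ2 : Equiv.Perm (Fin n2)) (hP2 : P2 = σ2.permMatrix K)
    (hHdec : H = C2 * U2 * P2) :
    fromRows A1 A2 =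
      fromBlocks C1 0 G C2 * fromBlocks U1 (V1 * P2ᵀ) 0 U2 *
        (fromBlocks 1 0 0 P2 * P1) := by
  have hU1 : U1⁻¹ * U1 = 1 := BlockTriangular.nonsing_inv_mul_of_diag_eq_one hU1tri hU1diag
  have hP1inv : P1ᵀ * P1 = 1 := hP1 ▸ transpose_permMatrix_mul_self σ1
  have hP2inv : P2ᵀ * P2 = 1 := hP2 ▸ transpose_permMatrix_mul_self σ2
  have hA2 : A2 = fromCols (G * U1) (G * V1 + C2 * U2 * P2) * P1 := by
    rw [← hHdec, hH, add_sub_cancel, hG, Matrix.mul_assoc _ U1⁻¹, hU1, Matrix.mul_one,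
      fromCols_toCols, Matrix.mul_assoc, hP1inv, Matrix.mul_one]
  calc fromRows A1 A2
      = fromRows (C1 * fromCols U1 V1) (fromCols (G * U1) (G * V1 + C2 * U2 * P2)) * P1 := by
        rw [hA1, hA2, fromRows_mul]
    _ = _ := by
        rw [← fromBlocks_mul_fromBlocks_mul_fromBlocks_one C1 G C2 U1 V1 U2 hP2inv,
          Matrix.mul_assoc]

/-- Block step correctness of the CUP algorithm.  The columns of the `m×n`
matrix `A = [[A1],[A2]]` are indexed by `Fin r1 ⊕ Fin n2` (so `n = r1 + n2`).
Given `A1 = C1·[U1 V1]·P1` with `C1` of full column rank `r1` in column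
echelon form and `U1` unit upper triangular, set `[A21 A22] = A2·P1ᵀ`,
`G = A21·U1⁻¹` and `H = A22 − G·V1`.  If `H = C2·U2·P2` is a CUP decomposition
of `H`, then `A = [[C1,0],[G,C2]] · [[U1, V1·P2ᵀ],[0,U2]] · (diag(I,P2)·P1)`
is a CUP decomposition of `A`. -/
theorem cup_stmt16 {K : Type*} [Field K] {k m2 r1 n2 : ℕ}
    (A1 : Matrix (Fin k) (Fin r1 ⊕ Fin n2) K)
    (A2 : Matrix (Fin m2) (Fin r1 ⊕ Fin n2) K)
    (C1 : Matrix (Fin k) (Fin r1) K)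
    (U1 : Matrix (Fin r1) (Fin r1) K)
    (V1 : Matrix (Fin r1) (Fin n2) K)
    (P1 : Matrix (Fin r1 ⊕ Fin n2) (Fin r1 ⊕ Fin n2) K)
    (σ1 : Equiv.Perm (Fin r1 ⊕ Fin n2)) (hP1 : P1 = σ1.permMatrix K)
    (piv1 : Fin r1 → Fin k) (hpiv1 : StrictMono piv1)
    (hC1piv : ∀ j : Fin r1, C1 (piv1 j) j ≠ 0)
    (hC1above : ∀ j : Fin r1, ∀ i : Fin k, (i : ℕ) < (piv1 j : ℕ) → C1 i j = 0)
    (hU1diag : ∀ i : Fin r1, U1 i i = 1)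
    (hU1tri : ∀ i j : Fin r1, (j : ℕ) < (i : ℕ) → U1 i j = 0)
    (hA1 : A1 = C1 * fromCols U1 V1 * P1)
    (G : Matrix (Fin m2) (Fin r1) K)
    (hG : G = (A2 * P1ᵀ).toCols₁ * U1⁻¹)
    (H : Matrix (Fin m2) (Fin n2) K)
    (hH : H = (A2 * P1ᵀ).toCols₂ - G * V1)
    (C2 : Matrix (Fin m2) (Fin n2) K) (hC2 : IsColEchelon C2)
    (U2 : Matrix (Fin n2) (Fin n2) K)
    (hU2diag : ∀ i : Fin n2, U2 i i = 1)
    (hU2tri : ∀ i j : Fin n2, (j : ℕ) < (i : ℕ) → U2 i j = 0)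
    (P2 : Matrix (Fin n2) (Fin n2) K)
    (σ2 : Equiv.Perm (Fin n2)) (hP2 : P2 = σ2.permMatrix K)
    (hHdec : H = C2 * U2 * P2) :
    fromRows A1 A2 =
      fromBlocks C1 0 G C2 * fromBlocks U1 (V1 * P2ᵀ) 0 U2 *
        (fromBlocks 1 0 0 P2 * P1) :=
  cup_stmt16_general A1 A2 C1 U1 V1 P1 σ1 hP1 hU1diag hU1tri hA1 G hG H hH C2 U2 P2 σ2 hP2 hHdec
end

section
/- If Q is the permutation matrix of σ = (0 i_0)(1 i_1)···(r−1 i_{r−1}) composed left to right as transpositions T_{0,i_0}···T_{r−1,i_{r−1}} with j ≤ i_j and i_0 < i_1 < ... < i_{r−1}, then for each j < r, row j of Q·M equals row i_j of M. -/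
open Matrix

/-!
`Q` is the permutation matrix of the product `σ` of the transpositions, so row `j` of `Q * M` is
row `σ j` of `M`. Evaluating `σ` at `j`, the transpositions `(k i_k)` with `k > j` fix `j` (as
`j < k ≤ i_k`), then `(j i_j)` sends `j` to `i_j`, and the remaining ones with `k < j` fix `i_j`
(as `k < j ≤ i_j` and the `i_k` are distinct).
-/

theorem Equiv.Perm.list_prod_apply_of_forall_apply_eq {α : Type*} (L : List (Equiv.Perm α))
    {x : α} (h : ∀ σ ∈ L, σ x = x) : L.prod x = x :=
  (MulAction.stabilizer (Equiv.Perm α) x).list_prod_mem h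

theorem Equiv.Perm.ofFn_swap_prod_apply {α : Type*} [LinearOrder α] :
    ∀ {r : ℕ} {a b : Fin r → α}, StrictMono a → Function.Injective b →
      (∀ k, a k ≤ b k) → ∀ j, (List.ofFn fun k => Equiv.swap (a k) (b k)).prod (a j) = b j
  | 0, _, _, _, _, _, j => j.elim0
  | r + 1, a, b, ha, hb, hab, j => by
    rw [List.ofFn_succ, List.prod_cons, Equiv.Perm.mul_apply]
    rcases Fin.eq_zero_or_eq_succ j with rfl | ⟨j, rfl⟩
    · have hfix :
          (List.ofFn fun k : Fin r => Equiv.swap (a k.succ) (b k.succ)).prod (a 0) = a 0 := by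
        refine list_prod_apply_of_forall_apply_eq _ fun σ hσ => ?_
        obtain ⟨k, rfl⟩ := List.mem_ofFn.mp hσ
        have hlt : a 0 < a k.succ := ha k.succ_pos
        exact Equiv.swap_apply_of_ne_of_ne hlt.ne (hlt.trans_le (hab k.succ)).ne
      rw [hfix, Equiv.swap_apply_left]
    · rw [ofFn_swap_prod_apply (a := fun k => a k.succ) (b := fun k => b k.succ)
        (ha.comp Fin.strictMono_succ) (hb.comp (Fin.succ_injective _)) (fun k => hab k.succ) j]
      exact Equiv.swap_apply_of_ne_of_ne ((ha j.succ_pos).trans_le (hab j.succ)).ne'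
        (hb.ne (Fin.succ_ne_zero j))

theorem Matrix.permMatrix_list_prod {ι R : Type*} [DecidableEq ι] [Fintype ι] [Semiring R]
    (L : List (Equiv.Perm ι)) :
    L.prod.permMatrix R = ((L.map (·.permMatrix R)).reverse).prod := by
  induction L with
  | nil => simp
  | cons σ L ih => simp [permMatrix_mul, ih, List.prod_append]

theorem Matrix.permMatrix_mul_apply {ι κ R : Type*} [DecidableEq ι] [Fintype ι]
    [NonAssocSemiring R] (σ : Equiv.Perm ι) (M : Matrix ι κ R) (i : ι) (c : κ) :
    (σ.permMatrix R * M) i c = M (σ i) c := by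
  rw [Equiv.Perm.permMatrix, PEquiv.toMatrix_toPEquiv_mul, submatrix_apply, id]

/-- Let `Q` be the product of the transposition matrices
`T_{0,i_0}, T_{1,i_1}, …, T_{r-1,i_{r-1}}` composed left to right (i.e. in the
order in which they are applied to the rows of `M`: `T_{0,i_0}` first), with
`j ≤ i_j` and `i_0 < i_1 < … < i_{r-1}`.  Then for each `j < r`, row `j` of
`Q·M` equals row `i_j` of `M`.  (Each transposition matrix is symmetric, so it
is unambiguous.) -/
theorem cup_stmt19 {K : Type*} [Field K] {m n r : ℕ} (hr : r ≤ m)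
    (M : Matrix (Fin m) (Fin n) K)
    (piv : Fin r → Fin m) (hpiv : StrictMono piv)
    (hle : ∀ j : Fin r, (j : ℕ) ≤ (piv j : ℕ))
    (Q : Matrix (Fin m) (Fin m) K)
    (hQ : Q = ((List.ofFn fun j : Fin r =>
        ((Equiv.swap (Fin.castLE hr j) (piv j)).permMatrix K)).reverse).prod) :
    ∀ j : Fin r, ∀ c : Fin n, (Q * M) (Fin.castLE hr j) c = M (piv j) c := by
  intro j c
  have hQ_perm :
      Q = (List.ofFn fun j : Fin r => Equiv.swap (Fin.castLE hr j) (piv j)).prod.permMatrix K := by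
    rw [hQ, permMatrix_list_prod, List.map_ofFn]
    rfl
  rw [hQ_perm, permMatrix_mul_apply,
    Equiv.Perm.ofFn_swap_prod_apply (Fin.strictMono_castLE hr) hpiv.injective hle]
end
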